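/- arXiv:2312.07827 — 3 statements merged into one kernel-verified Lean document; each statement's English description precedes it below -/
import Mathlib

section
/- Given a directed graph G = (V,E) and nonempty sets S, T ⊆ V achieving the optimum directed density ρ*(G) = ρ_G(S,T), if t = sqrt(|S|/|T|), then the optimum density of G_t equals ρ*(G). -/
open Finset

/-- The set of edges of the directed graph `E` going from `S` to `T`. -/
def eST {V : Type*} [DecidableEq V] (E : Finset (V × V)) (S T : Finset V) :
    Finset (V × V) :=
  E.filter fun p => p.1 ∈ S ∧ p.2 ∈ T

/-- Directed density `ρ_G(S,T) = |E(S,T)| / sqrt(|S||T|)`. -/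
noncomputable def dDen {V : Type*} [DecidableEq V] (E : Finset (V × V)) (S T : Finset V) : ℝ :=
  ((eST E S T).card : ℝ) / Real.sqrt ((S.card : ℝ) * (T.card : ℝ))

/-- Density of `S^L ∪ T^R` in the reduction graph `G_t`:
`|E(S,T)| / ((|S|/t + t|T|)/2)`. -/
noncomputable def wDen {V : Type*} [DecidableEq V] (E : Finset (V × V)) (t : ℝ)
    (S T : Finset V) : ℝ :=
  ((eST E S T).card : ℝ) / (((S.card : ℝ) / t + t * (T.card : ℝ)) / 2)

/-- Optimum directed density `ρ*(G)`, over nonempty `S, T`. -/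
noncomputable def rhoStar {V : Type*} [DecidableEq V] (E : Finset (V × V)) : ℝ :=
  sSup {x : ℝ | ∃ S T : Finset V, S.Nonempty ∧ T.Nonempty ∧ x = dDen E S T}

/-- Optimum density `ρ*(G_t)` of the vertex-weighted reduction graph, over nonempty `S, T`. -/
noncomputable def rhoStarT {V : Type*} [DecidableEq V] (E : Finset (V × V)) (t : ℝ) : ℝ :=
  sSup {x : ℝ | ∃ S T : Finset V, S.Nonempty ∧ T.Nonempty ∧ x = wDen E t S T}

lemma wDen_le_dDen {V : Type*} [DecidableEq V] (E : Finset (V × V)) (t : ℝ) (ht : 0 < t)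
    (S T : Finset V) (hS : S.Nonempty) (hT : T.Nonempty) :
    wDen E t S T ≤ dDen E S T := by
  have hs : (0:ℝ) < S.card := by exact_mod_cast hS.card_pos
  have hτ : (0:ℝ) < T.card := by exact_mod_cast hT.card_pos
  have hsq : (0:ℝ) < Real.sqrt ((S.card : ℝ) * T.card) :=
    Real.sqrt_pos.mpr (by positivity)
  have key : Real.sqrt ((S.card : ℝ) * T.card) ≤ ((S.card : ℝ) / t + t * T.card) / 2 := by
    have h1 : Real.sqrt ((S.card : ℝ) * T.card)
        = Real.sqrt ((S.card : ℝ) / t) * Real.sqrt (t * T.card) := by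
      rw [← Real.sqrt_mul (by positivity)]
      congr 1
      field_simp
    have h2 := Real.sq_sqrt (show (0:ℝ) ≤ (S.card:ℝ)/t by positivity)
    have h3 := Real.sq_sqrt (show (0:ℝ) ≤ t * T.card by positivity)
    nlinarith [sq_nonneg (Real.sqrt ((S.card:ℝ)/t) - Real.sqrt (t * T.card))]
  unfold wDen dDen
  exact div_le_div_of_nonneg_left (by positivity) hsq key

lemma wDen_eq_dDen {V : Type*} [DecidableEq V] (E : Finset (V × V))
    (S T : Finset V) (hS : S.Nonempty) (hT : T.Nonempty) :
    wDen E (Real.sqrt ((S.card : ℝ) / (T.card : ℝ))) S T = dDen E S T := by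
  have hs : (0:ℝ) < S.card := by exact_mod_cast hS.card_pos
  have hτ : (0:ℝ) < T.card := by exact_mod_cast hT.card_pos
  have hden : ((S.card : ℝ) / Real.sqrt ((S.card : ℝ) / T.card)
      + Real.sqrt ((S.card : ℝ) / T.card) * T.card) / 2
      = Real.sqrt ((S.card : ℝ) * T.card) := by
    rw [Real.sqrt_div hs.le, Real.sqrt_mul hs.le]
    set a := Real.sqrt (S.card : ℝ) with ha
    set b := Real.sqrt (T.card : ℝ) with hb
    have ha2 : a ^ 2 = (S.card : ℝ) := Real.sq_sqrt hs.le
    have hb2 : b ^ 2 = (T.card : ℝ) := Real.sq_sqrt hτ.le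
    have hap : 0 < a := Real.sqrt_pos.mpr hs
    have hbp : 0 < b := Real.sqrt_pos.mpr hτ
    field_simp
    nlinarith [ha2, hb2, mul_pos hap hbp]
  unfold wDen dDen
  rw [hden]

/-- If `(S,T)` achieves the optimum directed density and
`t = sqrt(|S|/|T|)`, then `ρ*(G_t) = ρ*(G)`. -/
theorem stmt2 {V : Type*} [Fintype V] [DecidableEq V]
    (E : Finset (V × V)) (S T : Finset V) (hS : S.Nonempty) (hT : T.Nonempty)
    (hopt : ∀ S' T' : Finset V, S'.Nonempty → T'.Nonempty → dDen E S' T' ≤ dDen E S T)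
    (t : ℝ) (ht : t = Real.sqrt ((S.card : ℝ) / (T.card : ℝ))) :
    rhoStarT E t = rhoStar E := by
  have hs : (0:ℝ) < S.card := by exact_mod_cast hS.card_pos
  have hτ : (0:ℝ) < T.card := by exact_mod_cast hT.card_pos
  have htpos : 0 < t := by rw [ht]; exact Real.sqrt_pos.mpr (by positivity)
  have hstar : rhoStar E = dDen E S T := by
    apply le_antisymm
    · apply Real.sSup_le
      · rintro x ⟨S', T', hS', hT', rfl⟩
        exact hopt S' T' hS' hT'
      · unfold dDen; positivity
    · apply le_csSup
      · refine ⟨dDen E S T, ?_⟩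
        rintro x ⟨S', T', hS', hT', rfl⟩
        exact hopt S' T' hS' hT'
      · exact ⟨S, T, hS, hT, rfl⟩
  have hwst : wDen E t S T = dDen E S T := by
    rw [ht]; exact wDen_eq_dDen E S T hS hT
  rw [hstar]
  apply le_antisymm
  · apply Real.sSup_le
    · rintro x ⟨S', T', hS', hT', rfl⟩
      exact (wDen_le_dDen E t htpos S' T' hS' hT').trans (hopt S' T' hS' hT')
    · unfold dDen; positivity
  · rw [← hwst]
    apply le_csSup
    · refine ⟨dDen E S T, ?_⟩
      rintro x ⟨S', T', hS', hT', rfl⟩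
      exact (wDen_le_dDen E t htpos S' T' hS' hT').trans (hopt S' T' hS' hT')
    · exact ⟨S, T, hS, hT, rfl⟩
end

section
/- Let α > 0 and 𝓛 be the level function for levels L_i = ((1+α)^i − 1)/α. If 𝓛(x) ≤ 𝓛(y) + 1 for x, y ≥ 0, then x ≤ (1+α)^2 · y + 2 + α. -/
/-- The level function `𝓛(x) = ⌈log_{1+α}(αx + 1)⌉` for the level thresholds
`L_0 = 0`, `L_i = (1+α)L_{i−1} + 1`, i.e. `L_i = ((1+α)^i − 1)/α`. -/
noncomputable def lv (α x : ℝ) : ℤ :=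
  ⌈Real.logb (1 + α) (α * x + 1)⌉

/-- If `𝓛(x) ≤ 𝓛(y) + 1` for `x, y ≥ 0`, then
`x ≤ (1+α)²·y + 2 + α`. -/
theorem stmt11 (α x y : ℝ) (hα : 0 < α) (hx : 0 ≤ x) (hy : 0 ≤ y)
    (h : lv α x ≤ lv α y + 1) :
    x ≤ (1 + α) ^ 2 * y + 2 + α := by
  set b := 1 + α with hbdef
  have hb : 1 < b := by simp [hbdef]; linarith
  have hb0 : 0 < b := by linarith
  have hxp : 0 < α * x + 1 := by nlinarith
  have hyp : 0 < α * y + 1 := by nlinarith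
  have h1 : α * x + 1 ≤ b ^ ((lv α x : ℝ)) := by
    calc α * x + 1 = b ^ Real.logb b (α * x + 1) :=
          (Real.rpow_logb hb0 hb.ne' hxp).symm
      _ ≤ b ^ ((lv α x : ℝ)) := by
          apply Real.rpow_le_rpow_of_exponent_le hb.le
          exact Int.le_ceil _
  have h2 : b ^ ((lv α y : ℝ) - 1) < α * y + 1 := by
    calc b ^ ((lv α y : ℝ) - 1) < b ^ Real.logb b (α * y + 1) := by
          apply Real.rpow_lt_rpow_of_exponent_lt hb
          have := Int.ceil_lt_add_one (Real.logb b (α * y + 1))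
          have : ((lv α y : ℝ)) < Real.logb b (α * y + 1) + 1 := by
            exact_mod_cast this
          linarith
      _ = α * y + 1 := Real.rpow_logb hb0 hb.ne' hyp
  have h3 : b ^ ((lv α x : ℝ)) ≤ b ^ ((lv α y : ℝ) + 1) := by
    apply Real.rpow_le_rpow_of_exponent_le hb.le
    have : ((lv α x : ℝ)) ≤ ((lv α y : ℝ)) + 1 := by exact_mod_cast h
    linarith
  have h4 : b ^ ((lv α y : ℝ) + 1) = b ^ (2 : ℝ) * b ^ ((lv α y : ℝ) - 1) := by
    rw [← Real.rpow_add hb0]; ring_nf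
  have h5 : b ^ (2 : ℝ) = b ^ 2 := by
    rw [show (2 : ℝ) = ((2 : ℕ) : ℝ) by norm_num, Real.rpow_natCast]
  have hb2 : 0 < b ^ 2 := by positivity
  have key : α * x + 1 < b ^ 2 * (α * y + 1) := by
    calc α * x + 1 ≤ b ^ ((lv α y : ℝ) + 1) := h1.trans h3
      _ = b ^ 2 * b ^ ((lv α y : ℝ) - 1) := by rw [h4, h5]
      _ < b ^ 2 * (α * y + 1) := by exact (mul_lt_mul_iff_right₀ hb2).mpr h2
  nlinarith [key]
end

section
/- If for all arcs u→v of an orientation we have 𝓛(ℓ(v)) ≤ 𝓛(ℓ(u)) + k for a fixed constant k ≥ 1, then the orientation is ((1+α)^{2k} − 1, k(2+α)(1+α)^{2k})-locally optimal; i.e., ℓ(v) ≤ (1+α)^{2k} ℓ(u) + k(2+α)(1+α)^{2k} for every arc u→v. -/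
/-- Load of a vertex `v` under the orientation `A` (a finite set of arcs) with
vertex weights `w`: `ℓ(v) = indeg(v) / w(v)`. -/
noncomputable def loadOf {V : Type*} [DecidableEq V] (A : Finset (V × V)) (w : V → ℝ)
    (v : V) : ℝ :=
  ((A.filter fun a => a.2 = v).card : ℝ) / w v

/-- If every arc `u→v` of the orientation satisfies
`𝓛(ℓ(v)) ≤ 𝓛(ℓ(u)) + k` for a fixed `k ≥ 1`, then the orientation is
`((1+α)^{2k} − 1, k(2+α)(1+α)^{2k})`-locally optimal, i.e.
`ℓ(v) ≤ (1+α)^{2k} ℓ(u) + k(2+α)(1+α)^{2k}` for every arc `u→v`. -/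
theorem stmt12 {V : Type*} [DecidableEq V] (A : Finset (V × V)) (w : V → ℝ)
    (hw : ∀ v, 1 ≤ w v) (α : ℝ) (hα : 0 < α) (k : ℕ) (hk : 1 ≤ k)
    (hlevel : ∀ u v : V, (u, v) ∈ A → lv α (loadOf A w v) ≤ lv α (loadOf A w u) + k) :
    ∀ u v : V, (u, v) ∈ A →
      loadOf A w v ≤ (1 + α) ^ (2 * k) * loadOf A w u + k * (2 + α) * (1 + α) ^ (2 * k) := by
  intro u v huv
  set x := loadOf A w u with hxdef
  set y := loadOf A w v with hydef
  have hb : (1 : ℝ) < 1 + α := by linarith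
  have hb0 : (0 : ℝ) < 1 + α := by linarith
  have hx0 : 0 ≤ x := div_nonneg (by positivity) (le_trans zero_le_one (hw u))
  have hy0 : 0 ≤ y := div_nonneg (by positivity) (le_trans zero_le_one (hw v))
  have hpy : (0 : ℝ) < α * y + 1 := by nlinarith
  have hpx : (0 : ℝ) < α * x + 1 := by nlinarith
  -- upper bound from ceiling at y
  have h1 : α * y + 1 ≤ (1 + α) ^ ((lv α y : ℝ)) := by
    have := Int.le_ceil (Real.logb (1 + α) (α * y + 1))
    exact (Real.logb_le_iff_le_rpow hb hpy).mp this
  -- lower bound from ceiling at x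
  have h2 : (1 + α) ^ ((lv α x : ℝ) - 1) < α * x + 1 := by
    have h := Int.ceil_lt_add_one (Real.logb (1 + α) (α * x + 1))
    have h' : ((lv α x : ℝ)) - 1 < Real.logb (1 + α) (α * x + 1) := by
      unfold lv; linarith [h]
    exact (Real.lt_logb_iff_rpow_lt hb hpx).mp h'
  have hij : lv α y ≤ lv α x + k := hlevel u v huv
  have h3 : (1 + α) ^ ((lv α y : ℝ)) ≤ (1 + α) ^ ((lv α x : ℝ) + k) := by
    apply Real.rpow_le_rpow_left_iff hb |>.mpr
    exact_mod_cast hij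
  have h4 : (1 + α) ^ ((lv α x : ℝ) + k)
      = (1 + α) ^ (k + 1 : ℕ) * (1 + α) ^ ((lv α x : ℝ) - 1) := by
    rw [← Real.rpow_natCast (1 + α) (k + 1), ← Real.rpow_add hb0]
    push_cast
    ring_nf
  have hpow : (0 : ℝ) < (1 + α) ^ (k + 1 : ℕ) := by positivity
  have h5 : α * y + 1 ≤ (1 + α) ^ (k + 1 : ℕ) * (α * x + 1) := by
    calc α * y + 1 ≤ (1 + α) ^ ((lv α y : ℝ)) := h1
      _ ≤ (1 + α) ^ ((lv α x : ℝ) + k) := h3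
      _ = (1 + α) ^ (k + 1 : ℕ) * (1 + α) ^ ((lv α x : ℝ) - 1) := h4
      _ ≤ (1 + α) ^ (k + 1 : ℕ) * (α * x + 1) := by nlinarith [h2]
  -- pow comparisons
  have hple : (1 + α) ^ (k + 1 : ℕ) ≤ (1 + α) ^ (2 * k) :=
    pow_le_pow_right₀ (le_of_lt hb) (by omega)
  -- geometric sum bound: ((1+α)^(k+1) - 1)/α ≤ (k+1) * (1+α)^(2k)
  have hgeo : (1 + α) ^ (k + 1 : ℕ) - 1 ≤ (k + 1) * (1 + α) ^ (2 * k) * α := by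
    have hsum : ∑ i ∈ Finset.range (k + 1), (1 + α) ^ i
        = ((1 + α) ^ (k + 1 : ℕ) - 1) / α := by
      rw [geom_sum_eq (by linarith : (1 : ℝ) + α ≠ 1)]
      ring_nf
    have hle : ∑ i ∈ Finset.range (k + 1), (1 + α) ^ i
        ≤ (k + 1) * (1 + α) ^ (2 * k) := by
      calc ∑ i ∈ Finset.range (k + 1), (1 + α) ^ i
          ≤ ∑ _i ∈ Finset.range (k + 1), (1 + α) ^ (2 * k) := by
            apply Finset.sum_le_sum
            intro i hi
            exact pow_le_pow_right₀ (le_of_lt hb)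
              (by simp at hi; omega)
        _ = (k + 1) * (1 + α) ^ (2 * k) := by
            rw [Finset.sum_const, Finset.card_range]; push_cast; ring
    rw [hsum] at hle
    have := (div_le_iff₀ hα).mp hle
    linarith
  -- combine
  have hk1 : (1 : ℝ) ≤ k := by exact_mod_cast hk
  have hpow2 : (0 : ℝ) < (1 + α) ^ (2 * k) := by positivity
  -- from h5: α y ≤ b^{k+1} α x + (b^{k+1} - 1)
  have h6 : α * y ≤ (1 + α) ^ (k + 1 : ℕ) * α * x + ((1 + α) ^ (k + 1 : ℕ) - 1) := by
    nlinarith [h5]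
  -- target times α
  have h7 : α * y ≤ (1 + α) ^ (2 * k) * α * x + (k : ℝ) * (2 + α) * (1 + α) ^ (2 * k) * α := by
    have hx' : (1 + α) ^ (k + 1 : ℕ) * α * x ≤ (1 + α) ^ (2 * k) * α * x := by
      have := mul_le_mul_of_nonneg_right hple (mul_nonneg (le_of_lt hα) hx0)
      nlinarith
    have hc : ((1 + α) ^ (k + 1 : ℕ) - 1) ≤ (k : ℝ) * (2 + α) * (1 + α) ^ (2 * k) * α := by
      have : ((k : ℝ) + 1) * (1 + α) ^ (2 * k) * α ≤ (k : ℝ) * (2 + α) * (1 + α) ^ (2 * k) * α := by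
        have h8 : (k : ℝ) + 1 ≤ (k : ℝ) * (2 + α) := by nlinarith
        have := mul_le_mul_of_nonneg_right
          (mul_le_mul_of_nonneg_right h8 hpow2.le) hα.le
        linarith
      linarith [hgeo]
    linarith
  nlinarith [h7]
end
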